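/- Let I ⊂ K[x_1,...,x_n] be a monomial ideal generated in degree 2. Then I is polymatroidal if and only if I has linear quotients with respect to the reverse lexicographical ordering of the minimal generators induced by every ordering of the variables. -/
import Mathlib


/-- A monomial in `n` variables, given by its exponent vector. -/
abbrev Mon (n : ℕ) := Fin n → ℕ

/-- Total degree of a monomial. -/
def mdeg {n : ℕ} (u : Mon n) : ℕ := ∑ i, u i

/-- The exponent vector of `x_j * (u / x_i)`. -/
def exch {n : ℕ} (u : Mon n) (i j : Fin n) : Mon n :=
  fun l => u l - (if l = i then 1 else 0) + (if l = j then 1 else 0)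

/-- Membership of the monomial `w` in the monomial ideal generated by the set `G`. -/
def memI {n : ℕ} (G : Set (Mon n)) (w : Mon n) : Prop :=
  ∃ u ∈ G, ∀ l, u l ≤ w l

/-- `G` (the set of minimal generators, all of one degree) is polymatroidal: the
exchange property holds. -/
def IsPolymatroidal {n : ℕ} (G : Set (Mon n)) : Prop :=
  ∀ u ∈ G, ∀ v ∈ G, ∀ i, v i < u i → ∃ j, u j < v j ∧ memI G (exch u i j)

/-- The (strict) lexicographic order on monomials of a common degree, induced by the
variable ordering `x_{σ 0} > x_{σ 1} > ⋯ > x_{σ (n-1)}`. -/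
def lexGT {n : ℕ} (σ : Fin n → Fin n) (u v : Mon n) : Prop :=
  ∃ i, v (σ i) < u (σ i) ∧ ∀ k, k < i → u (σ k) = v (σ k)

/-- `u ≥_lex v` with respect to the variable ordering given by `σ`. -/
def lexGE {n : ℕ} (σ : Fin n → Fin n) (u v : Mon n) : Prop :=
  u = v ∨ lexGT σ u v

/-- The (strict) reverse lexicographic order on monomials of a common degree, induced by
the variable ordering `x_{σ 0} > x_{σ 1} > ⋯ > x_{σ (n-1)}`. -/
def rlexGT {n : ℕ} (σ : Fin n → Fin n) (u v : Mon n) : Prop :=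
  ∃ i, u (σ i) < v (σ i) ∧ ∀ k, i < k → u (σ k) = v (σ k)

/-- `G` has linear quotients with respect to the order `gt`: for every `u ∈ G` the colon
ideal `(v ∈ G : gt v u) : u` is generated by variables, i.e. for every `v ∈ G` with
`gt v u` there is a variable `x_i` dividing `v : u` with `x_i·u` in the ideal generated
by the `gt`-larger generators. -/
def LinQuot {n : ℕ} (G : Set (Mon n)) (gt : Mon n → Mon n → Prop) : Prop :=
  ∀ u ∈ G, ∀ v ∈ G, gt v u →
    ∃ i, u i < v i ∧
      ∃ w ∈ G, gt w u ∧ ∀ l, w l ≤ u l + (if l = i then 1 else 0)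

lemma mon_eq_of_le_of_deg {n : ℕ} {w z : Mon n} (h : ∀ l, w l ≤ z l)
    (hs : mdeg w = mdeg z) : w = z := by
  funext l
  by_contra hne
  have hlt : w l < z l := lt_of_le_of_ne (h l) hne
  have : mdeg w < mdeg z :=
    Finset.sum_lt_sum (fun m _ => h m) ⟨l, Finset.mem_univ l, hlt⟩
  omega

lemma mdeg_exch {n : ℕ} {u : Mon n} {i j : Fin n} (hi : 1 ≤ u i) (hij : j ≠ i) :
    mdeg (exch u i j) = mdeg u := by
  unfold mdeg exch
  rw [Finset.sum_add_distrib]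
  have h1 : ∑ l : Fin n, (if l = j then 1 else 0) = 1 := by simp
  have h2 : ∑ l : Fin n, (u l - if l = i then 1 else 0)
      = ∑ l : Fin n, u l - ∑ l : Fin n, (if l = i then 1 else 0) := by
    apply Finset.sum_tsub_distrib
    intro m _
    split_ifs with h
    · subst h; exact hi
    · exact Nat.zero_le _
  have h3 : ∑ l : Fin n, (if l = i then 1 else 0) = 1 := by simp
  rw [h1, h2, h3]
  have : 1 ≤ ∑ l : Fin n, u l :=
    le_trans hi (Finset.single_le_sum (fun m _ => Nat.zero_le _) (Finset.mem_univ i))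
  omega

lemma exch_of_le {n : ℕ} {w u : Mon n} {j l : Fin n}
    (hle : ∀ m, w m ≤ u m + (if m = j then 1 else 0))
    (hs : mdeg w = mdeg u) (hl : w l < u l) :
    j ≠ l ∧ w = exch u l j := by
  have hjl : j ≠ l := by
    rintro rfl
    have hlt : mdeg w < mdeg u := by
      refine Finset.sum_lt_sum (fun m _ => ?_) ⟨j, Finset.mem_univ j, hl⟩
      by_cases h : m = j
      · subst h; exact hl.le
      · have := hle m; simp only [if_neg h, add_zero] at this; exact this
    omega
  have hle' : ∀ m, w m ≤ exch u l j m := by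
    intro m
    have h1 := hle m
    unfold exch
    rcases eq_or_ne m l with rfl | hml
    · rw [if_pos rfl, if_neg (Ne.symm hjl)]
      rw [if_neg (Ne.symm hjl)] at h1
      omega
    · rw [if_neg hml]
      split_ifs at h1 ⊢ <;> omega
  have hd : mdeg (exch u l j) = mdeg u := mdeg_exch (by omega) hjl
  exact ⟨hjl, mon_eq_of_le_of_deg hle' (by omega)⟩

/-- A monomial ideal generated in degree 2 is polymatroidal if and only if it has linear
quotients with respect to the reverse lexicographic ordering of the minimal generators
induced by every ordering of the variables. -/
theorem stmt_4 {n : ℕ} (G : Set (Mon n)) (hdeg : ∀ u ∈ G, mdeg u = 2) :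
    IsPolymatroidal G ↔
      ∀ σ : Fin n → Fin n, Function.Bijective σ → LinQuot G (rlexGT σ) := by
  constructor
  · -- forward direction
    intro hP σ hσ u hu v hv hgt
    obtain ⟨p, hvp, hafter⟩ := hgt
    obtain ⟨j, hj, hm⟩ := hP u hu v hv (σ p) hvp
    obtain ⟨g, hgG, hgle⟩ := hm
    have hjσ : j ≠ σ p := fun h => by rw [h] at hj; omega
    have hup : 1 ≤ u (σ p) := by omega
    have hdeg_e : mdeg (exch u (σ p) j) = mdeg u := mdeg_exch hup hjσ
    have hg : g = exch u (σ p) j :=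
      mon_eq_of_le_of_deg hgle (by rw [hdeg_e, hdeg u hu, hdeg g hgG])
    refine ⟨j, hj, exch u (σ p) j, hg ▸ hgG, ⟨p, ?_, ?_⟩, ?_⟩
    · show exch u (σ p) j (σ p) < u (σ p)
      unfold exch
      rw [if_pos rfl, if_neg (Ne.symm hjσ)]
      omega
    · intro k hk
      have hkp : k ≠ p := hk.ne'
      have hne1 : σ k ≠ σ p := fun h => hkp (hσ.1 h)
      obtain ⟨q, hq⟩ := hσ.2 j
      have hqp : ¬ p < q := by
        intro h
        have := hafter q h
        rw [hq] at this
        omega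
      have hqk : q ≠ k := by
        intro h
        subst h
        exact hqp hk
      have hne2 : σ k ≠ j := by
        intro h
        rw [← hq] at h
        exact hqk (hσ.1 h).symm
      show exch u (σ p) j (σ k) = u (σ k)
      unfold exch
      rw [if_neg hne1, if_neg hne2]
      omega
    · intro m
      unfold exch
      split_ifs <;> omega
  · -- backward direction
    intro H u hu v hv i hvi
    have hu2 := hdeg u hu
    have hv2 := hdeg v hv
    have hui : 1 ≤ u i := by omega
    by_cases hn : 2 ≤ n
    swap
    · exfalso
      have hn1 : n = 1 := by have := i.pos; omega
      have huniv : (Finset.univ : Finset (Fin n)) = {i} := by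
        refine Finset.eq_singleton_iff_unique_mem.mpr ⟨Finset.mem_univ i, fun x _ => ?_⟩
        have h1 := x.isLt
        have h2 := i.isLt
        exact Fin.ext (by omega)
      have e1 : mdeg u = u i := by rw [mdeg, huniv, Finset.sum_singleton]
      have e2 : mdeg v = v i := by rw [mdeg, huniv, Finset.sum_singleton]
      omega
    · set z : Fin n := ⟨0, by omega⟩ with hzdef
      set c : Fin n := ⟨n-1, by omega⟩ with hcdef
      have hzc : z ≠ c := by
        intro h
        have := congrArg Fin.val h
        simp [hzdef, hcdef] at this
        omega
      obtain ⟨a, hai, hacond⟩ :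
          ∃ a : Fin n, a ≠ i ∧ ((∃ b, b ≠ i ∧ 1 ≤ u b) → 1 ≤ u a) := by
        by_cases hex : ∃ b, b ≠ i ∧ 1 ≤ u b
        · obtain ⟨b, hbi, hub⟩ := hex
          exact ⟨b, hbi, fun _ => hub⟩
        · rcases eq_or_ne i z with h | hiz
          · exact ⟨c, by rw [h]; exact Ne.symm hzc, fun hh => absurd hh hex⟩
          · exact ⟨z, Ne.symm hiz, fun hh => absurd hh hex⟩
      set f : Equiv.Perm (Fin n) := Equiv.swap c i with hf
      set b : Fin n := f a with hb
      have hfb : f b = a := Equiv.swap_apply_self c i a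
      have hbc : b ≠ c := by
        intro h
        have : a = i := by
          have := congrArg f h
          rw [hfb] at this
          rw [this]
          exact (Equiv.swap_apply_left c i)
        exact hai this
      set g : Equiv.Perm (Fin n) := Equiv.swap z b with hg
      set σe : Equiv.Perm (Fin n) := g.trans f with hσe
      have hσz : σe z = a := by
        show f (g z) = a
        rw [show g z = b from Equiv.swap_apply_left z b]
        exact hfb
      have hσc : σe c = i := by
        show f (g c) = i
        rw [Equiv.swap_apply_of_ne_of_ne (Ne.symm hzc) (Ne.symm hbc)]
        exact Equiv.swap_apply_left c i
      have hgtvu : rlexGT (⇑σe) v u := by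
        refine ⟨c, by rw [hσc]; exact hvi, fun k hk => ?_⟩
        exfalso
        have hkl := k.isLt
        rw [Fin.lt_def] at hk
        simp only [hcdef] at hk
        omega
      obtain ⟨j, hj, w, hwG, hwrlex, hwle⟩ := H (⇑σe) σe.bijective u hu v hv hgtvu
      have hji : j ≠ i := fun h => by rw [h] at hj; omega
      have hw2 := hdeg w hwG
      have hEx : ∃ l, w l < u l := by
        by_contra hno
        push_neg at hno
        have hwu : u = w := mon_eq_of_le_of_deg hno (by omega)
        obtain ⟨p, hp, _⟩ := hwrlex
        rw [← hwu] at hp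
        omega
      obtain ⟨l, hl⟩ := hEx
      obtain ⟨hjl, hwe⟩ := exch_of_le hwle (by omega) hl
      rcases eq_or_ne l i with rfl | hli
      · exact ⟨j, hj, w, hwG, fun m => le_of_eq (congrFun hwe m)⟩
      · exfalso
        have hul : 1 ≤ u l := by omega
        have hua : 1 ≤ u a := hacond ⟨l, hli, hul⟩
        have hal : a = l := by
          by_contra hal
          have hsum : ∑ m ∈ ({i, a, l} : Finset (Fin n)), u m ≤ mdeg u :=
            Finset.sum_le_sum_of_subset (Finset.subset_univ _)
          rw [Finset.sum_insert (by simp [Ne.symm hai, Ne.symm hli]),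
            Finset.sum_pair hal] at hsum
          omega
        subst hal
        obtain ⟨p, hp, hafter⟩ := hwrlex
        have hpa : σe p = a := by
          by_contra hpa
          rw [hwe] at hp
          unfold exch at hp
          rw [if_neg hpa] at hp
          split_ifs at hp <;> omega
        have hpz : p = z := σe.injective (by rw [hpa, hσz])
        have hq : σe (σe.symm j) = j := Equiv.apply_symm_apply σe j
        set q : Fin n := σe.symm j with hqdef
        have hqz : q ≠ z := by
          intro h
          rw [h, hσz] at hq
          exact hjl hq.symm
        have hzq : z < q := by
          rw [Fin.lt_def]
          have hq0 : q.val ≠ 0 := by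
            intro h
            exact hqz (Fin.ext (by simp [hzdef, h]))
          simp only [hzdef]
          omega
        have hkey := hafter q (hpz ▸ hzq)
        rw [hq, hwe] at hkey
        unfold exch at hkey
        rw [if_neg hjl, if_pos rfl] at hkey
        omega
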